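/- arXiv:2311.03668 — 11 statements merged into one kernel-verified Lean document; each statement's English description precedes it below -/
import Mathlib

section
/- If positive integers x_1,…,x_n satisfy 1/x_1 + ⋯ + 1/x_n = 1 with n ≥ 2, then for every prime p there exist distinct indices k ≠ l such that the p-adic valuations of x_k and x_l are equal. -/
theorem stmt_0 (n : ℕ) (hn : 2 ≤ n) (x : Fin n → ℕ) (hx : ∀ i, 0 < x i)
    (hsum : ∑ i, (1 : ℚ) / x i = 1) (p : ℕ) (hp : p.Prime) :
    ∃ k l : Fin n, k ≠ l ∧ padicValNat p (x k) = padicValNat p (x l) := by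
  haveI : Fact p.Prime := ⟨hp⟩
  by_contra hcon
  push_neg at hcon
  -- define F : ℕ → ℚ
  set F : ℕ → ℚ := fun m => if h : m < n then 1 / (x ⟨m, h⟩ : ℚ) else 1 with hF
  have hFpos : ∀ m, 0 < F m := by
    intro m
    simp only [hF]
    split
    · next h =>
        have := hx ⟨m, h⟩
        positivity
    · norm_num
  have hval : ∀ (h : Fin n), padicValRat p (F h.val) = -(padicValNat p (x h) : ℤ) := by
    intro i
    simp only [hF, i.isLt, dif_pos, one_div]
    rw [padicValRat.inv, padicValRat.of_nat]
  -- pick j maximizing padicValNat p (x i)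
  obtain ⟨j, -, hj⟩ := Finset.exists_max_image (Finset.univ : Finset (Fin n))
    (fun i => padicValNat p (x i)) ⟨⟨0, by omega⟩, Finset.mem_univ _⟩
  -- there is some k ≠ j
  have hsum' : ∑ i ∈ Finset.range n, F i = 1 := by
    rw [← hsum, Finset.sum_range fun m => F m]
    apply Finset.sum_congr rfl
    intro i _
    simp [hF, i.isLt]
  -- S = range n erase j
  set S := (Finset.range n).erase j.val with hS
  have hSne : S.Nonempty := by
    have h2 : 1 < (Finset.range n).card := by simp; omega
    rw [hS]
    exact (Finset.one_lt_card_iff_nontrivial.mp h2).exists_ne j.val |>.imp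
      (fun a ⟨ha, hne⟩ => Finset.mem_erase.mpr ⟨hne, ha⟩)
  have hlt : ∀ i ∈ S, padicValRat p (F j.val) < padicValRat p (F i) := by
    intro i hi
    rw [hS, Finset.mem_erase, Finset.mem_range] at hi
    obtain ⟨hne, hilt⟩ := hi
    set i' : Fin n := ⟨i, hilt⟩ with hi'
    have : F i = F i'.val := rfl
    rw [this, hval, hval]
    have hle := hj i' (Finset.mem_univ _)
    have hneq : padicValNat p (x i') ≠ padicValNat p (x j) := by
      intro h
      exact hcon i' j (fun hij => hne (congrArg Fin.val hij)) h
    omega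
  have hmain := padicValRat.lt_sum_of_lt (p := p) (j := j.val) hSne hlt hFpos
  -- now F j + ∑ S = 1
  have hsplit : F j.val + ∑ i ∈ S, F i = 1 := by
    rw [hS, Finset.add_sum_erase _ _ (by simp [Finset.mem_range])]
    exact hsum'
  have hSsum_ne : (∑ i ∈ S, F i) ≠ 0 :=
    ne_of_gt (Finset.sum_pos (fun i _ => hFpos i) hSne)
  have h1 : padicValRat p ((F j.val) + ∑ i ∈ S, F i) = padicValRat p (F j.val) :=
    padicValRat.add_eq_of_lt (by rw [hsplit]; norm_num) (ne_of_gt (hFpos _)) hSsum_ne hmain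
  rw [hsplit] at h1
  simp only [padicValRat.one] at h1
  -- so padicValNat p (x j) = 0, but max ≥ 1
  have hj0 : padicValNat p (x j) = 0 := by
    have := hval j
    omega
  -- get k ≠ j, with val ≤ 0 hence = 0, contradiction with distinctness
  obtain ⟨k, _, hkne⟩ := (Finset.one_lt_card_iff_nontrivial.mp
    (by simp [Finset.card_univ]; omega : 1 < (Finset.univ : Finset (Fin n)).card)).exists_ne j
  have hk0 : padicValNat p (x k) = 0 := by
    have := hj k (Finset.mem_univ _); omega
  exact hcon k j hkne (hk0.trans hj0.symm)
end

section
/- If positive integers x_1,…,x_n satisfy 1/x_1 + ⋯ + 1/x_n = 1, then for every prime p, either v_p(x_i) = 0 for some index i, or there exist distinct indices k ≠ l with v_p(x_k) = v_p(x_l). -/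
theorem stmt_1 (n : ℕ) (x : Fin n → ℕ) (hx : ∀ i, 0 < x i)
    (hsum : ∑ i, (1 : ℚ) / x i = 1) (p : ℕ) (hp : p.Prime) :
    (∃ i, padicValNat p (x i) = 0) ∨
      ∃ k l : Fin n, k ≠ l ∧ padicValNat p (x k) = padicValNat p (x l) := by
  haveI : Fact p.Prime := ⟨hp⟩
  by_contra hcon
  push_neg at hcon
  obtain ⟨h1, h2⟩ := hcon
  have hn : n ≠ 0 := by rintro rfl; simp at hsum
  haveI : Nonempty (Fin n) := Fin.pos_iff_nonempty.mp (Nat.pos_of_ne_zero hn)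
  have hnorm : ∀ i, padicNorm p ((1:ℚ) / (x i)) = (p : ℚ) ^ (padicValNat p (x i) : ℤ) := by
    intro i
    have hxi : ((x i : ℚ)) ≠ 0 := Nat.cast_ne_zero.mpr (hx i).ne'
    rw [one_div, padicNorm.eq_zpow_of_nonzero (inv_ne_zero hxi), padicValRat.inv,
      padicValRat.of_nat, neg_neg]
  have hp1 : (1 : ℚ) < (p : ℚ) := by exact_mod_cast hp.one_lt
  obtain ⟨i0, hi0⟩ := Finite.exists_max fun i => padicValNat p (x i)
  have hlt : ∀ i ∈ Finset.univ.erase i0,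
      padicNorm p ((1:ℚ) / (x i)) < (p : ℚ) ^ (padicValNat p (x i0) : ℤ) := by
    intro i hi
    rw [hnorm]
    apply zpow_lt_zpow_right₀ hp1
    exact_mod_cast lt_of_le_of_ne (hi0 i) (h2 i i0 (Finset.ne_of_mem_erase hi))
  have htpos : (0 : ℚ) < (p : ℚ) ^ (padicValNat p (x i0) : ℤ) := zpow_pos (by linarith) _
  have hrest : padicNorm p (∑ i ∈ Finset.univ.erase i0, (1:ℚ) / (x i))
      < (p : ℚ) ^ (padicValNat p (x i0) : ℤ) := padicNorm.sum_lt' hlt htpos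
  have hne : padicNorm p ((1:ℚ) / (x i0))
      ≠ padicNorm p (∑ i ∈ Finset.univ.erase i0, (1:ℚ) / (x i)) := by
    rw [hnorm]; exact (ne_of_lt hrest).symm
  have key := padicNorm.add_eq_max_of_ne (p := p) hne
  rw [Finset.add_sum_erase Finset.univ (fun i => (1:ℚ)/(x i)) (Finset.mem_univ i0), hsum, padicNorm.one,
    hnorm, max_eq_left hrest.le] at key
  have hv : 0 < (padicValNat p (x i0) : ℤ) := by
    exact_mod_cast Nat.pos_of_ne_zero (h1 i0)
  have : (1 : ℚ) < (p : ℚ) ^ (padicValNat p (x i0) : ℤ) := one_lt_zpow₀ hp1 hv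
  linarith [key.symm]
end

section
/- Suppose positive integers x_1,…,x_n satisfy 1/x_1 + ⋯ + 1/x_n = 1 and a prime p divides at least one of the x_i. Then there exist distinct indices k ≠ l with v_p(x_k) = v_p(x_l) > 0. -/
/-!
Let `i` be an index at which `v_p(x_i)` is maximal, say equal to `m`. If no other index attains `m`,
then `1/x_i` is the unique term of largest `p`-adic norm `p^m` in `∑ 1/x_j`, so by the ultrametric
inequality the sum has norm `p^m`. The sum is `1`, hence `m = 0`,
whereas `p ∣ x_{i₀}` forces `m ≥ v_p(x_{i₀}) ≥ 1`.
-/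

namespace padicNorm

variable {p : ℕ} [Fact p.Prime]

theorem sum_eq_of_forall_lt {ι : Type*} {s : Finset ι} {f : ι → ℚ} {i : ι}
    (hi : i ∈ s) (hlt : ∀ j ∈ s, j ≠ i → padicNorm p (f j) < padicNorm p (f i)) :
    padicNorm p (∑ j ∈ s, f j) = padicNorm p (f i) := by
  classical
  rw [← Finset.add_sum_erase s f hi]
  obtain hs | hs := (s.erase i).eq_empty_or_nonempty
  · simp [hs]
  have hrest : padicNorm p (∑ j ∈ s.erase i, f j) < padicNorm p (f i) :=
    sum_lt hs fun j hj => hlt j (Finset.mem_of_mem_erase hj) (Finset.ne_of_mem_erase hj)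
  rw [add_eq_max_of_ne hrest.ne', max_eq_left hrest.le]

theorem one_div_natCast {x : ℕ} (hx : x ≠ 0) :
    padicNorm p (1 / (x : ℚ)) = (p : ℚ) ^ padicValNat p x := by
  have hx' : (x : ℚ) ≠ 0 := Nat.cast_ne_zero.mpr hx
  rw [padicNorm.div, padicNorm.one, padicNorm.eq_zpow_of_nonzero hx', padicValRat.of_nat,
    zpow_neg, zpow_natCast, one_div, inv_inv]

end padicNorm

theorem padicValNat_eq_zero_of_forall_lt_of_sum_one_div_eq_one {ι : Type*} [Fintype ι]
    {p : ℕ} [Fact p.Prime] {x : ι → ℕ} (hx : ∀ i, x i ≠ 0)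
    (hsum : ∑ i, (1 : ℚ) / x i = 1) {i : ι}
    (hlt : ∀ j, j ≠ i → padicValNat p (x j) < padicValNat p (x i)) :
    padicValNat p (x i) = 0 := by
  have hp : 1 < (p : ℚ) := by exact_mod_cast (Fact.out : p.Prime).one_lt
  have hnorm : padicNorm p (∑ j, (1 : ℚ) / x j) = (p : ℚ) ^ padicValNat p (x i) := by
    rw [padicNorm.sum_eq_of_forall_lt (Finset.mem_univ i), padicNorm.one_div_natCast (hx i)]
    intro j _ hj
    rw [padicNorm.one_div_natCast (hx i), padicNorm.one_div_natCast (hx j)]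
    exact pow_lt_pow_right₀ hp (hlt j hj)
  rw [hsum, padicNorm.one] at hnorm
  by_contra hne
  exact (one_lt_pow₀ hp hne).ne' hnorm.symm

theorem stmt_2 (n : ℕ) (x : Fin n → ℕ) (hx : ∀ i, 0 < x i)
    (hsum : ∑ i, (1 : ℚ) / x i = 1) (p : ℕ) (hp : p.Prime)
    (hdvd : ∃ i, p ∣ x i) :
    ∃ k l : Fin n, k ≠ l ∧ padicValNat p (x k) = padicValNat p (x l) ∧
      0 < padicValNat p (x k) := by
  have : Fact p.Prime := ⟨hp⟩
  by_contra! hunique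
  obtain ⟨i₀, hi₀⟩ := hdvd
  obtain ⟨i, -, hmax⟩ := Finset.univ.exists_max_image (fun j => padicValNat p (x j))
    ⟨i₀, Finset.mem_univ i₀⟩
  have hpos : 0 < padicValNat p (x i) :=
    (one_le_padicValNat_of_dvd (hx i₀).ne' hi₀).trans (hmax i₀ (Finset.mem_univ i₀))
  have hlt : ∀ j, j ≠ i → padicValNat p (x j) < padicValNat p (x i) := fun j hj =>
    (hmax j (Finset.mem_univ j)).lt_of_ne fun heq => (hunique j i hj heq).not_gt (heq ▸ hpos)
  exact hpos.ne' <|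
    padicValNat_eq_zero_of_forall_lt_of_sum_one_div_eq_one (fun j => (hx j).ne') hsum hlt
end

section
/- Suppose positive integers x_1,…,x_n satisfy 1/x_1 + ⋯ + 1/x_n = 1, a prime p divides at least one x_i, and α = max_i v_p(x_i) is attained exactly at the indices i_1,…,i_s with s ≥ 2. Write x_{i_t} = p^α · x'_{i_t} with p not dividing x'_{i_t}. Let β = max over j not in {i_1,…,i_s} of v_p(x_j). Then β < α and p^{α−β} divides σ_{s−1}(x'_{i_1},…,x'_{i_s}), the (s−1)-st elementary symmetric polynomial of the x'_{i_t}. -/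
/-!
Write `x i = p ^ v i * y i` with `v i = v_p(x i)`, so `p ∤ y i`. Multiplying `∑ 1 / x i = 1`
by `p ^ α * ∏ y j` gives `∑ i, p ^ (α - v i) * ∏ j ≠ i, y j = p ^ α * ∏ j, y j`. Modulo
`p ^ (α - β)` only the terms with `v i = α` survive, and together they are `σ_{s-1}` of the `y i`
with `v i = α` times the product of the remaining `y j`, which is prime to `p`.
-/

open Finset

namespace Finset

variable {ι : Type*} [DecidableEq ι]

theorem powersetCard_card_sub_one_eq_image_erase {s : Finset ι} (hs : s.Nonempty) :
    s.powersetCard (#s - 1) = s.image s.erase := by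
  ext t
  simp only [mem_powersetCard, mem_image]
  constructor
  · rintro ⟨hts, hcard⟩
    obtain ⟨i, hi⟩ : ∃ i, s \ t = {i} := by
      rw [← card_eq_one, card_sdiff_of_subset hts, hcard]
      have := hs.card_pos
      omega
    refine ⟨i, (mem_sdiff.mp (hi ▸ mem_singleton_self i)).1, ?_⟩
    rw [← sdiff_singleton_eq_erase, ← hi, sdiff_sdiff_eq_self hts]
  · rintro ⟨i, hi, rfl⟩
    exact ⟨erase_subset i s, card_erase_of_mem hi⟩

theorem sum_powersetCard_card_sub_one {M : Type*} [AddCommMonoid M] {s : Finset ι}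
    (hs : s.Nonempty) (g : Finset ι → M) :
    ∑ t ∈ s.powersetCard (#s - 1), g t = ∑ i ∈ s, g (s.erase i) := by
  rw [powersetCard_card_sub_one_eq_image_erase hs, sum_image s.erase_injOn]

theorem prod_erase_eq_prod_erase_mul_prod_sdiff {M : Type*} [CommMonoid M] {s t : Finset ι}
    (hts : t ⊆ s) {i : ι} (hi : i ∈ t) (f : ι → M) :
    ∏ j ∈ s.erase i, f j = (∏ j ∈ t.erase i, f j) * ∏ j ∈ s \ t, f j := by
  have hsdiff : s.erase i \ t.erase i = s \ t := by
    ext j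
    simp only [mem_sdiff, mem_erase]
    grind
  rw [← prod_sdiff (erase_subset_erase i hts), hsdiff, mul_comm]

end Finset

variable {ι : Type*} [DecidableEq ι]

theorem sum_pow_sub_mul_prod_erase {s : Finset ι} {p α : ℕ} (hp : p ≠ 0) {a y : ι → ℕ}
    (ha : ∀ i ∈ s, a i ≤ α) (hy : ∀ i ∈ s, y i ≠ 0)
    (hsum : ∑ i ∈ s, (1 : ℚ) / (p ^ a i * y i) = 1) :
    ∑ i ∈ s, p ^ (α - a i) * ∏ j ∈ s.erase i, y j = p ^ α * ∏ j ∈ s, y j := by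
  have hterm : ∀ i ∈ s, (p : ℚ) ^ (α - a i) * ∏ j ∈ s.erase i, (y j : ℚ)
      = 1 / (p ^ a i * y i) * (p ^ α * ∏ j ∈ s, (y j : ℚ)) := by
    intro i hi
    have hpQ : (p : ℚ) ≠ 0 := by exact_mod_cast hp
    have hyi : (y i : ℚ) ≠ 0 := by exact_mod_cast hy i hi
    rw [← mul_prod_erase s _ hi, ← pow_sub_mul_pow (p : ℚ) (ha i hi)]
    field_simp
  have hQ : ∑ i ∈ s, (p : ℚ) ^ (α - a i) * ∏ j ∈ s.erase i, (y j : ℚ)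
      = p ^ α * ∏ j ∈ s, (y j : ℚ) := by
    rw [sum_congr rfl hterm, ← sum_mul, hsum, one_mul]
  exact_mod_cast hQ

theorem pow_sub_dvd_sum_prod_erase {s S : Finset ι} (hS : S ⊆ s) {p α β : ℕ} (hp : p.Prime)
    {a y : ι → ℕ} (hy : ∀ j ∈ s, ¬ p ∣ y j) (haS : ∀ i ∈ S, a i = α) (haβ : ∀ i ∈ s \ S, a i ≤ β)
    (hsum : ∑ i ∈ s, p ^ (α - a i) * ∏ j ∈ s.erase i, y j = p ^ α * ∏ j ∈ s, y j) :
    p ^ (α - β) ∣ ∑ i ∈ S, ∏ j ∈ S.erase i, y j := by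
  have hcop : Nat.Coprime (p ^ (α - β)) (∏ j ∈ s \ S, y j) :=
    Nat.Coprime.pow_left _ <| Nat.Coprime.prod_right fun j hj =>
      (Nat.Prime.coprime_iff_not_dvd hp).mpr (hy j (mem_sdiff.mp hj).1)
  have hrest : p ^ (α - β) ∣ ∑ i ∈ s \ S, p ^ (α - a i) * ∏ j ∈ s.erase i, y j :=
    dvd_sum fun i hi => dvd_mul_of_dvd_left (pow_dvd_pow p (by have := haβ i hi; omega)) _
  have hS_part : ∑ i ∈ S, p ^ (α - a i) * ∏ j ∈ s.erase i, y j
      = (∑ i ∈ S, ∏ j ∈ S.erase i, y j) * ∏ j ∈ s \ S, y j := by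
    rw [sum_mul]
    refine sum_congr rfl fun i hi => ?_
    rw [haS i hi, Nat.sub_self, pow_zero, one_mul, prod_erase_eq_prod_erase_mul_prod_sdiff hS hi]
  refine hcop.dvd_of_dvd_mul_right ?_
  rw [← hS_part, ← Nat.dvd_add_right hrest, sum_sdiff hS, hsum]
  exact dvd_mul_of_dvd_left (pow_dvd_pow p (Nat.sub_le α β)) _

theorem Nat.not_dvd_div_pow_padicValNat {p n : ℕ} (hp : p.Prime) (hn : n ≠ 0) :
    ¬ p ∣ n / p ^ padicValNat p n := by
  simpa [Nat.factorization_def n hp] using Nat.not_dvd_ordCompl hp hn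

theorem stmt_4 (n : ℕ) (x : Fin n → ℕ) (hx : ∀ i, 0 < x i)
    (hsum : ∑ i, (1 : ℚ) / x i = 1) (p : ℕ) (hp : p.Prime)
    (hdvd : ∃ i, p ∣ x i)
    (α : ℕ) (hα : α = Finset.univ.sup (fun i => padicValNat p (x i)))
    (S : Finset (Fin n)) (hS : S = Finset.univ.filter (fun i => padicValNat p (x i) = α))
    (hcard : 2 ≤ S.card)
    (β : ℕ) (hβ : β = (Finset.univ \ S).sup (fun i => padicValNat p (x i))) :
    β < α ∧
      p ^ (α - β) ∣
        ∑ t ∈ S.powersetCard (S.card - 1), ∏ i ∈ t, (x i / p ^ α) := by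
  have := Fact.mk hp
  set a := fun i => padicValNat p (x i)
  set y := fun i => x i / p ^ a i
  have hxy : ∀ i, x i = p ^ a i * y i := fun i => (Nat.mul_div_cancel' pow_padicValNat_dvd).symm
  have hpy : ∀ i, ¬ p ∣ y i := fun i => Nat.not_dvd_div_pow_padicValNat hp (hx i).ne'
  have haα : ∀ i, a i ≤ α := fun i => hα ▸ le_sup (mem_univ i)
  have haS : ∀ i ∈ S, a i = α := fun i hi => by simpa [hS] using hi
  have haβ : ∀ i ∈ univ \ S, a i ≤ β := fun i hi => hβ ▸ le_sup hi
  have hα_pos : 0 < α := by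
    obtain ⟨i, hi⟩ := hdvd
    exact (one_le_padicValNat_of_dvd (hx i).ne' hi).trans (haα i)
  have hβα : β < α := by
    rw [hβ, Finset.sup_lt_iff (bot_lt_iff_ne_bot.mpr hα_pos.ne')]
    intro i hi
    exact (haα i).lt_of_ne fun h => (mem_sdiff.mp hi).2 (by simpa [hS] using h)
  have hidentity := sum_pow_sub_mul_prod_erase (s := univ) (α := α) (a := a) (y := y)
    hp.ne_zero (fun i _ => haα i) (fun i _ h => hpy i (h ▸ dvd_zero p)) (by simpa [hxy] using hsum)
  refine ⟨hβα, ?_⟩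
  rw [sum_powersetCard_card_sub_one (card_pos.mp (by omega))]
  convert pow_sub_dvd_sum_prod_erase (subset_univ S) hp (fun j _ => hpy j) haS haβ hidentity
    using 3 with _ _ j hj
  rw [← haS j (mem_of_mem_erase hj)]
end

section
/- Suppose positive integers x_1,…,x_9 satisfy 1/x_1 + ⋯ + 1/x_9 = 1 and at least one x_i is even. Then the number of indices i at which the maximal 2-adic valuation α_2 = max_i v_2(x_i) is attained is even. -/
lemma val_lcm_aux {ι : Type*} [DecidableEq ι] (s : Finset ι) (hs : s.Nonempty) (x : ι → ℕ)
    (hx : ∀ i ∈ s, x i ≠ 0) :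
    padicValNat 2 (s.lcm x) = s.sup (fun i => padicValNat 2 (x i)) := by
  induction hs using Finset.Nonempty.cons_induction with
  | singleton i => simp [Nat.lcm]
  | cons i s hi hs ih =>
    have hx' : ∀ j ∈ s, x j ≠ 0 := fun j hj => hx j (Finset.mem_cons_of_mem hj)
    have hxi : x i ≠ 0 := hx i (Finset.mem_cons_self i s)
    have hxl : s.lcm x ≠ 0 := by
      rw [Ne, Finset.lcm_eq_zero_iff]
      rintro ⟨j, hj, h0⟩
      exact hx' j hj h0
    have h2 : Nat.Prime 2 := Nat.prime_two
    rw [Finset.cons_eq_insert, Finset.lcm_insert, Finset.sup_insert, ← ih hx',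
      ← Nat.factorization_def _ h2, ← Nat.factorization_def _ h2, ← Nat.factorization_def _ h2,
      show lcm (x i) (s.lcm x) = Nat.lcm (x i) (s.lcm x) from rfl,
      Nat.factorization_lcm hxi hxl]
    rfl

theorem stmt_6 (x : Fin 9 → ℕ) (hx : ∀ i, 0 < x i)
    (hsum : ∑ i, (1 : ℚ) / x i = 1) (heven : ∃ i, 2 ∣ x i) :
    Even (Finset.univ.filter
      (fun i => padicValNat 2 (x i) =
        Finset.univ.sup (fun j => padicValNat 2 (x j)))).card := by
  set L := Finset.univ.lcm x with hLdef
  have hxne : ∀ i, x i ≠ 0 := fun i => (hx i).ne'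
  have hdvd : ∀ i, x i ∣ L := fun i => Finset.dvd_lcm (Finset.mem_univ i)
  have hL : L ≠ 0 := by
    rw [hLdef, Ne, Finset.lcm_eq_zero_iff]
    rintro ⟨j, hj, h0⟩
    exact hxne j h0
  -- key equation
  have key : ∑ i, L / x i = L := by
    have : ((∑ i, L / x i : ℕ) : ℚ) = (L : ℚ) := by
      rw [Nat.cast_sum]
      rw [Finset.sum_congr rfl (fun i _ => Nat.cast_div (hdvd i) (Nat.cast_ne_zero.2 (hxne i)))]
      calc ∑ i, (L : ℚ) / (x i : ℚ) = (L : ℚ) * ∑ i, (1 : ℚ) / x i := by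
            rw [Finset.mul_sum]; exact Finset.sum_congr rfl fun i _ => by ring
        _ = L := by rw [hsum, mul_one]
    exact_mod_cast this
  have hvL : padicValNat 2 L = Finset.univ.sup (fun j => padicValNat 2 (x j)) :=
    val_lcm_aux _ Finset.univ_nonempty _ (fun i _ => hxne i)
  have hEven : Even (∑ i, L / x i) := by
    rw [key]
    obtain ⟨i, hi⟩ := heven
    exact even_iff_two_dvd.2 (hi.trans (hdvd i))
  rw [Finset.even_sum_iff_even_card_odd] at hEven
  convert hEven using 2
  apply Finset.filter_congr
  intro i _
  have hdiv : padicValNat 2 (L / x i) =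
      padicValNat 2 L - padicValNat 2 (x i) := padicValNat.div_of_dvd (hdvd i)
  have hle : padicValNat 2 (x i) ≤ Finset.univ.sup (fun j => padicValNat 2 (x j)) :=
    Finset.le_sup (f := fun j => padicValNat 2 (x j)) (Finset.mem_univ i)
  have hne : L / x i ≠ 0 := Nat.div_ne_zero_iff_of_dvd (hdvd i) |>.2 ⟨hL, hxne i⟩
  have hodd : Odd (L / x i) ↔ padicValNat 2 (L / x i) = 0 := by
    rw [← Nat.not_even_iff_odd, even_iff_two_dvd, padicValNat.eq_zero_iff]
    simp [hne]
  rw [hodd, hdiv, hvL]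
  omega
end

section
/- If x_1 < x_2 < ⋯ < x_9 are distinct positive integers of the form 2^a·3^b with 1/x_1 + ⋯ + 1/x_9 = 1, where 2 is among the x_i and max_i v_2(x_i) = 1, then {x_1,…,x_9} = {2, 3, 9, 27, 81, 243, 729, 2187, 4374}. -/
/-!
Since `v₂(xᵢ) ≤ 1`, every `xᵢ` is `3^b` or `2·3^b`, and two distinct numbers of this
shape differ by a factor of at least `3/2`. Hence the reciprocal sum of the terms from `xᵢ`
on is squeezed between `1/xᵢ` and `3/xᵢ`. A total of `1` forces `x₁ = 2`; a remaining sum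
`1/(2·3^k)` with more than one term forces the next term to be `3^(k+1)`, leaving
`1/(2·3^(k+1))`, and a single remaining term must be `2·3^k` itself.
-/

def IsPowThreeOrTwice (n : ℕ) : Prop := ∃ b, n = 3 ^ b ∨ n = 2 * 3 ^ b

lemma isPowThreeOrTwice_of_padicValNat_le_one {a b : ℕ}
    (h : padicValNat 2 (2 ^ a * 3 ^ b) ≤ 1) : IsPowThreeOrTwice (2 ^ a * 3 ^ b) := by
  rw [padicValNat.mul (by positivity) (by positivity), padicValNat.prime_pow,
    padicValNat.pow, padicValNat_primes (by norm_num), mul_zero, add_zero] at h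
  interval_cases a
  · exact ⟨b, .inl (one_mul _)⟩
  · exact ⟨b, .inr (pow_one 2 ▸ rfl)⟩

lemma three_pow_trichotomy (b d : ℕ) : 3 * 3 ^ b ≤ 3 ^ d ∨ b = d ∨ 3 * 3 ^ d ≤ 3 ^ b := by
  rcases lt_trichotomy b d with h | h | h
  · exact .inl (pow_succ' 3 b ▸ Nat.pow_le_pow_right (by norm_num) h)
  · exact .inr (.inl h)
  · exact .inr (.inr (pow_succ' 3 d ▸ Nat.pow_le_pow_right (by norm_num) h))

namespace IsPowThreeOrTwice

lemma pos {n : ℕ} (hn : IsPowThreeOrTwice n) : 0 < n := by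
  obtain ⟨b, rfl | rfl⟩ := hn <;> positivity

lemma three_mul_le_two_mul {m n : ℕ} (hm : IsPowThreeOrTwice m) (hn : IsPowThreeOrTwice n)
    (h : m < n) : 3 * m ≤ 2 * n := by
  obtain ⟨b, rfl | rfl⟩ := hm <;> obtain ⟨d, rfl | rfl⟩ := hn <;>
    rcases three_pow_trichotomy b d with h' | rfl | h' <;> omega

lemma eq_pow_succ_of_lt_of_lt {n k : ℕ} (hn : IsPowThreeOrTwice n) (h₁ : 2 * 3 ^ k < n)
    (h₂ : n < 2 * 3 ^ (k + 1)) : n = 3 ^ (k + 1) := by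
  have := pow_succ' 3 k
  obtain ⟨b, rfl | rfl⟩ := hn
  · rcases three_pow_trichotomy b (k + 1) with h | rfl | h <;> omega
  · rcases three_pow_trichotomy b k with h | rfl | h <;> omega

end IsPowThreeOrTwice

def recipSum (l : List ℕ) : ℚ := (l.map fun n : ℕ => (1 : ℚ) / n).sum

@[simp] lemma recipSum_nil : recipSum [] = 0 := rfl

@[simp] lemma recipSum_cons (a : ℕ) (l : List ℕ) : recipSum (a :: l) = 1 / a + recipSum l :=
  List.sum_cons

lemma recipSum_pos {l : List ℕ} (hne : l ≠ []) (hpos : ∀ n ∈ l, 0 < n) : 0 < recipSum l :=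
  List.sum_pos _ (by simpa using fun n hn => hpos n hn) (by simpa using hne)

lemma recipSum_lt_of_isChain {a : ℕ} {l : List ℕ} (ha : 0 < a)
    (hl : (a :: l).IsChain fun m n => 3 * m ≤ 2 * n) : recipSum (a :: l) < 3 / a := by
  induction l generalizing a with
  | nil => simp only [recipSum_cons, recipSum_nil, add_zero]; gcongr; norm_num
  | cons b l ih =>
    rw [List.isChain_cons_cons] at hl
    have hb : 0 < b := by omega
    have hab : (3 : ℚ) * a ≤ 2 * b := by exact_mod_cast hl.1
    calc recipSum (a :: b :: l) = 1 / a + recipSum (b :: l) := recipSum_cons a _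
      _ < 1 / a + 3 / b := by gcongr; exact ih hb hl.2
      _ ≤ 1 / a + 2 / a := by
        gcongr 1 / _ + ?_
        rw [div_le_div_iff₀ (by positivity) (by positivity)]
        linarith
      _ = 3 / a := by ring

lemma recipSum_cons_bounds {a : ℕ} {l : List ℕ} (hne : l ≠ [])
    (hl : (a :: l).Pairwise (· < ·)) (hS : ∀ n ∈ a :: l, IsPowThreeOrTwice n) :
    1 / (a : ℚ) < recipSum (a :: l) ∧ recipSum (a :: l) < 3 / a := by
  constructor
  · rw [recipSum_cons, lt_add_iff_pos_right]
    exact recipSum_pos hne fun n hn => (hS n (List.mem_cons_of_mem a hn)).pos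
  · refine recipSum_lt_of_isChain (hS a List.mem_cons_self).pos (List.Pairwise.isChain ?_)
    exact hl.imp_of_mem fun hm hn h => (hS _ hm).three_mul_le_two_mul (hS _ hn) h

/-- `greedyTail k n = [3^(k+1), …, 3^(k+n), 2·3^(k+n)]`, from iterating
`1/(2·3^k) = 1/3^(k+1) + 1/(2·3^(k+1))`. -/
def greedyTail : ℕ → ℕ → List ℕ
  | k, 0 => [2 * 3 ^ k]
  | k, n + 1 => 3 ^ (k + 1) :: greedyTail (k + 1) n

theorem eq_greedyTail {k : ℕ} {l : List ℕ} (hl : l.Pairwise (· < ·))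
    (hS : ∀ n ∈ l, IsPowThreeOrTwice n) (hsum : recipSum l = 1 / (2 * 3 ^ k)) :
    l = greedyTail k (l.length - 1) := by
  induction l generalizing k with
  | nil => exact absurd hsum (by simp)
  | cons a l ih =>
    have ha := (hS a List.mem_cons_self).pos
    rcases eq_or_ne l [] with rfl | hne
    · rw [recipSum_cons, recipSum_nil, add_zero, one_div, one_div, inv_inj] at hsum
      have : a = 2 * 3 ^ k := by exact_mod_cast hsum
      simp [this, greedyTail]
    obtain ⟨hlo, hhi⟩ := recipSum_cons_bounds hne hl hS
    rw [hsum] at hlo hhi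
    have h₁ : 2 * 3 ^ k < a := by
      rw [one_div_lt_one_div (by positivity) (by positivity)] at hlo; exact_mod_cast hlo
    have h₂ : a < 2 * 3 ^ (k + 1) := by
      rw [div_lt_div_iff₀ (by positivity) (by positivity)] at hhi
      rw [pow_succ, ← mul_assoc]; exact_mod_cast (by linarith : (a : ℚ) < 2 * 3 ^ k * 3)
    obtain rfl := (hS a List.mem_cons_self).eq_pow_succ_of_lt_of_lt h₁ h₂
    have hsum' : recipSum l = 1 / (2 * 3 ^ (k + 1)) := by
      rw [recipSum_cons] at hsum
      push_cast at hsum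
      rw [pow_succ] at hsum ⊢
      linear_combination hsum
    obtain ⟨n, hn⟩ : ∃ n, l.length = n + 1 :=
      ⟨l.length - 1, by have := List.length_pos_of_ne_nil hne; omega⟩
    have htail := ih hl.of_cons (fun m hm => hS m (.tail _ hm)) hsum'
    rw [hn, Nat.add_sub_cancel] at htail
    simp only [List.length_cons, hn, Nat.add_sub_cancel, greedyTail]
    exact congrArg _ htail

theorem eq_two_cons_greedyTail {l : List ℕ} (hl : l.Pairwise (· < ·))
    (hS : ∀ n ∈ l, IsPowThreeOrTwice n) (hlen : 2 ≤ l.length) (hsum : recipSum l = 1) :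
    l = 2 :: greedyTail 0 (l.length - 2) := by
  obtain _ | ⟨a, l⟩ := l
  · simp at hlen
  have hne : l ≠ [] := by rintro rfl; simp at hlen
  obtain ⟨hlo, hhi⟩ := recipSum_cons_bounds hne hl hS
  have ha := (hS a List.mem_cons_self).pos
  rw [hsum, div_lt_one (by positivity)] at hlo
  rw [hsum, lt_div_iff₀ (by positivity), one_mul] at hhi
  obtain rfl : a = 2 := by
    have : 1 < a := by exact_mod_cast hlo
    have : a < 3 := by exact_mod_cast hhi
    omega
  have hsum' : recipSum l = 1 / (2 * 3 ^ 0) := by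
    rw [recipSum_cons] at hsum
    norm_num at hsum ⊢
    linarith
  have htail := eq_greedyTail hl.of_cons (fun m hm => hS m (.tail _ hm)) hsum'
  exact congrArg _ (htail.trans (by simp))

theorem stmt_8_general (x : Fin 9 → ℕ) (hmono : StrictMono x)
    (hform : ∀ i, ∃ a b : ℕ, x i = 2 ^ a * 3 ^ b)
    (hsum : ∑ i, (1 : ℚ) / x i = 1)
    (hval : Finset.univ.sup (fun i => padicValNat 2 (x i)) = 1) :
    Finset.univ.image x = ({2, 3, 9, 27, 81, 243, 729, 2187, 4374} : Finset ℕ) := by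
  have hS : ∀ n ∈ List.ofFn x, IsPowThreeOrTwice n := by
    intro n hn
    obtain ⟨i, rfl⟩ := List.mem_ofFn.1 hn
    obtain ⟨a, b, hab⟩ := hform i
    have hle : padicValNat 2 (x i) ≤ 1 :=
      hval ▸ Finset.le_sup (f := fun i => padicValNat 2 (x i)) (Finset.mem_univ i)
    rw [hab] at hle ⊢
    exact isPowThreeOrTwice_of_padicValNat_le_one hle
  have hsum' : recipSum (List.ofFn x) = 1 := by
    rw [recipSum, List.map_ofFn, List.sum_ofFn]
    exact hsum
  have hx := eq_two_cons_greedyTail (List.pairwise_ofFn.2 fun _ _ h => hmono h) hS (by simp) hsum'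
  obtain rfl : x = ![2, 3, 9, 27, 81, 243, 729, 2187, 4374] :=
    List.ofFn_inj.1 (hx.trans (by simp [greedyTail]))
  decide

theorem stmt_8 (x : Fin 9 → ℕ) (hmono : StrictMono x) (hx : ∀ i, 0 < x i)
    (hform : ∀ i, ∃ a b : ℕ, x i = 2 ^ a * 3 ^ b)
    (hsum : ∑ i, (1 : ℚ) / x i = 1)
    (h2 : ∃ i, x i = 2)
    (hval : Finset.univ.sup (fun i => padicValNat 2 (x i)) = 1) :
    Finset.univ.image x = ({2, 3, 9, 27, 81, 243, 729, 2187, 4374} : Finset ℕ) :=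
  stmt_8_general x hmono hform hsum hval
end

section
/- There is no tuple of distinct positive integers x_1,…,x_9, each of the form 2^a·3^b, with 1/x_1 + ⋯ + 1/x_9 = 1, such that 2 does not appear among the x_i, max_i v_2(x_i) = 1, and 2 divides at least one x_i. -/
/-!
Since `v₂(xᵢ) ≤ 1`, `xᵢ ≠ 2`, and `xᵢ ≠ 1` (the other reciprocals are positive), every `xᵢ` is
`3^b` or `2·3^b` with `b ≥ 1`. Distinct such numbers have reciprocal sum at most
`(1 + 1/2) · ∑_{b ≥ 1} 3^{-b} = 3/4 < 1`.
-/

open Finset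

lemma padicValNat_two_pow_mul_three_pow (a b : ℕ) : padicValNat 2 (2 ^ a * 3 ^ b) = a := by
  have h3 : ¬ 2 ∣ 3 ^ b := fun h => by
    have := Nat.prime_two.dvd_of_dvd_pow h
    omega
  rw [padicValNat.mul (by positivity) (by positivity), padicValNat.prime_pow,
    padicValNat.eq_zero_of_not_dvd h3, add_zero]

lemma one_lt_of_sum_one_div_eq_one {ι : Type*} [Fintype ι] [Nontrivial ι] {x : ι → ℕ}
    (hpos : ∀ i, 0 < x i) (hsum : ∑ i, (1 : ℚ) / x i = 1) (i : ι) : 1 < x i := by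
  obtain ⟨j, hji⟩ := exists_ne i
  have hj : (0 : ℚ) < 1 / x j := by
    have := hpos j
    positivity
  have hij : (1 : ℚ) / x i + 1 / x j ≤ ∑ k, (1 : ℚ) / x k :=
    add_le_sum (f := fun k => (1 : ℚ) / x k) (fun k _ => by positivity) (mem_univ i) (mem_univ j)
      hji.symm
  have hi : (1 : ℚ) / x i < 1 / 1 := by linarith
  exact_mod_cast (one_div_lt_one_div (by exact_mod_cast hpos i) one_pos).1 hi

lemma exists_mem_one_two_mul_three_pow {a b : ℕ} (ha : a ≤ 1) (h1 : 1 < 2 ^ a * 3 ^ b)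
    (h2 : 2 ^ a * 3 ^ b ≠ 2) :
    ∃ c ∈ ({1, 2} : Finset ℕ), ∃ b', 1 ≤ b' ∧ 2 ^ a * 3 ^ b = c * 3 ^ b' := by
  refine ⟨2 ^ a, by interval_cases a <;> simp, b, ?_, rfl⟩
  rcases b with _ | b
  · interval_cases a <;> simp_all
  · omega

lemma sum_one_div_le_of_forall_eq_mul_three_pow {s : Finset ℕ}
    (hs : ∀ n ∈ s, ∃ c ∈ ({1, 2} : Finset ℕ), ∃ b, 1 ≤ b ∧ n = c * 3 ^ b) :
    ∑ n ∈ s, (1 : ℚ) / n ≤ 3 / 4 := by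
  set N := s.sup id + 1
  have hsub : s ⊆ (({1, 2} : Finset ℕ) ×ˢ Ico 1 N).image fun p => p.1 * 3 ^ p.2 := by
    intro n hn
    obtain ⟨c, hc, b, hb, rfl⟩ := hs n hn
    refine mem_image.2 ⟨(c, b), mem_product.2 ⟨hc, mem_Ico.2 ⟨hb, ?_⟩⟩, rfl⟩
    have hn : c * 3 ^ b ≤ s.sup id := le_sup (f := id) hn
    have hb : b < 3 ^ b := Nat.lt_pow_self (by norm_num)
    have hc1 : 1 ≤ c := by
      simp only [mem_insert, mem_singleton] at hc
      omega
    have : 3 ^ b ≤ c * 3 ^ b := Nat.le_mul_of_pos_left _ hc1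
    omega
  calc ∑ n ∈ s, (1 : ℚ) / n
      ≤ ∑ n ∈ (({1, 2} : Finset ℕ) ×ˢ Ico 1 N).image (fun p : ℕ × ℕ => p.1 * 3 ^ p.2),
          (1 : ℚ) / n :=
        sum_le_sum_of_subset_of_nonneg hsub fun _ _ _ => by positivity
    _ ≤ ∑ p ∈ ({1, 2} : Finset ℕ) ×ˢ Ico 1 N, (1 : ℚ) / ((p.1 * 3 ^ p.2 : ℕ) : ℚ) :=
        sum_image_le_of_nonneg fun _ _ => by positivity
    _ = (1 + 1 / 2) * ∑ b ∈ Ico 1 N, (3 : ℚ)⁻¹ ^ b := by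
        rw [sum_product, sum_pair (show (1 : ℕ) ≠ 2 by norm_num), ← sum_add_distrib, mul_sum]
        refine sum_congr rfl fun b _ => ?_
        simp only [Nat.cast_mul, Nat.cast_pow, Nat.cast_one, Nat.cast_ofNat, inv_pow]
        ring
    _ ≤ (1 + 1 / 2) * (3⁻¹ ^ 1 / (1 - 3⁻¹)) := by
        gcongr
        exact geom_sum_Ico_le_of_lt_one (by norm_num) (by norm_num)
    _ = 3 / 4 := by norm_num

theorem stmt_9 :
    ¬ ∃ x : Fin 9 → ℕ, Function.Injective x ∧ (∀ i, 0 < x i) ∧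
      (∀ i, ∃ a b : ℕ, x i = 2 ^ a * 3 ^ b) ∧
      (∑ i, (1 : ℚ) / x i = 1) ∧
      (∀ i, x i ≠ 2) ∧
      Finset.univ.sup (fun i => padicValNat 2 (x i)) = 1 ∧
      (∃ i, 2 ∣ x i) := by
  rintro ⟨x, hinj, hpos, hform, hsum, hne2, hsup, -⟩
  have hx : ∀ n ∈ univ.image x, ∃ c ∈ ({1, 2} : Finset ℕ), ∃ b, 1 ≤ b ∧ n = c * 3 ^ b := by
    simp only [mem_image, mem_univ, true_and, forall_exists_index, forall_apply_eq_imp_iff]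
    intro i
    obtain ⟨a, b, hab⟩ := hform i
    have ha : a ≤ 1 := by
      have := le_sup (f := fun i => padicValNat 2 (x i)) (mem_univ i)
      rwa [hsup, hab, padicValNat_two_pow_mul_three_pow] at this
    rw [hab]
    exact exists_mem_one_two_mul_three_pow ha (hab ▸ one_lt_of_sum_one_div_eq_one hpos hsum i)
      (hab ▸ hne2 i)
  have hle := sum_one_div_le_of_forall_eq_mul_three_pow hx
  rw [sum_image fun i _ j _ h => hinj h, hsum] at hle
  norm_num at hle
end

section
/- Suppose distinct positive integers x_1,…,x_9, each of the form 2^a·q^b for a fixed odd prime q with a ≤ 2, satisfy 1/x_1 + ⋯ + 1/x_9 = 1, and suppose the maximal q-adic valuation among the x_i is attained exactly three times. Then q = 7. -/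
theorem stmt_12 (q : ℕ) (hq : q.Prime) (hqodd : Odd q)
    (x : Fin 9 → ℕ) (hinj : Function.Injective x) (hx : ∀ i, 0 < x i)
    (hform : ∀ i, ∃ a b : ℕ, a ≤ 2 ∧ x i = 2 ^ a * q ^ b)
    (hsum : ∑ i, (1 : ℚ) / x i = 1)
    (hdvd : ∃ i, q ∣ x i)
    (hthrice : (Finset.univ.filter
      (fun i => padicValNat q (x i) =
        Finset.univ.sup (fun j => padicValNat q (x j)))).card = 3) :
    q = 7 := by
  haveI : Fact q.Prime := ⟨hq⟩
  have hq2 : q ≠ 2 := by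
    rintro rfl
    exact absurd hqodd (by decide)
  obtain ⟨a, b, hab⟩ : ∃ a b : Fin 9 → ℕ, ∀ i, a i ≤ 2 ∧ x i = 2 ^ a i * q ^ b i := by
    choose a b h1 h2 using hform
    exact ⟨a, b, fun i => ⟨h1 i, h2 i⟩⟩
  have ha2 : ∀ i, a i ≤ 2 := fun i => (hab i).1
  have hxe : ∀ i, x i = 2 ^ a i * q ^ b i := fun i => (hab i).2
  have hqnd2 : ∀ n : ℕ, ¬ q ∣ 2 ^ n := by
    intro n h
    exact hq2 ((Nat.prime_dvd_prime_iff_eq hq Nat.prime_two).mp (hq.dvd_of_dvd_pow h))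
  have hval : ∀ i, padicValNat q (x i) = b i := by
    intro i
    rw [hxe i, padicValNat.mul (pow_ne_zero _ two_ne_zero) (pow_ne_zero _ hq.pos.ne'),
      padicValNat.eq_zero_of_not_dvd (hqnd2 (a i)), padicValNat.prime_pow, zero_add]
  set B := Finset.univ.sup (fun j => padicValNat q (x j)) with hB
  have hbB : ∀ i, b i ≤ B := by
    intro i
    rw [← hval i]
    exact Finset.le_sup (f := fun j => padicValNat q (x j)) (Finset.mem_univ i)
  have hB1 : 1 ≤ B := by
    obtain ⟨i, hi⟩ := hdvd
    have hb1 : 1 ≤ b i := by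
      by_contra h
      push_neg at h
      interval_cases hbi : b i
      · rw [hxe i, hbi] at hi
        simp at hi
        exact hqnd2 (a i) hi
    exact le_trans hb1 (hbB i)
  set N : Fin 9 → ℕ := fun i => 2 ^ (2 - a i) * q ^ (B - b i) with hN
  have key : ∀ i, N i * x i = 4 * q ^ B := by
    intro i
    calc N i * x i = (2 ^ (2 - a i) * 2 ^ a i) * (q ^ (B - b i) * q ^ b i) := by
          rw [hxe i]; ring
      _ = 2 ^ 2 * q ^ B := by
          rw [← pow_add, ← pow_add, Nat.sub_add_cancel (ha2 i), Nat.sub_add_cancel (hbB i)]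
      _ = 4 * q ^ B := by norm_num
  have hsumN : ∑ i, N i = 4 * q ^ B := by
    have hcast : ((∑ i, N i : ℕ) : ℚ) = ((4 * q ^ B : ℕ) : ℚ) := by
      push_cast
      have : ∀ i : Fin 9, (N i : ℚ) = (4 * q ^ B : ℚ) * (1 / x i) := by
        intro i
        have hxne : (x i : ℚ) ≠ 0 := Nat.cast_ne_zero.mpr (hx i).ne'
        rw [mul_one_div, eq_div_iff hxne]
        exact_mod_cast congrArg (fun n : ℕ => (n : ℚ)) (key i)
      rw [Finset.sum_congr rfl (fun i _ => this i), ← Finset.mul_sum, hsum, mul_one]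
    exact_mod_cast hcast
  set S := Finset.univ.filter
      (fun i => padicValNat q (x i) = Finset.univ.sup (fun j => padicValNat q (x j))) with hS
  have hmemS : ∀ i, i ∈ S ↔ b i = B := by
    intro i
    simp only [hS, Finset.mem_filter, Finset.mem_univ, true_and, hval i, hB]
  -- sum over S is 7
  have hinjS : Set.InjOn a S := by
    intro i hi j hj hij
    apply hinj
    rw [hxe i, hxe j, hij, (hmemS i).mp hi, (hmemS j).mp hj]
  have himg : Finset.image a S = Finset.range 3 := by
    apply Finset.eq_of_subset_of_card_le
    · intro m hm
      obtain ⟨i, _, rfl⟩ := Finset.mem_image.mp hm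
      exact Finset.mem_range.mpr (Nat.lt_succ_of_le (ha2 i))
    · rw [Finset.card_image_of_injOn hinjS, hthrice, Finset.card_range]
  have hsumS : ∑ i ∈ S, N i = 7 := by
    have h1 : ∑ i ∈ S, N i = ∑ i ∈ S, 2 ^ (2 - a i) := by
      apply Finset.sum_congr rfl
      intro i hi
      rw [hN]
      simp only [(hmemS i).mp hi, Nat.sub_self, pow_zero, mul_one]
    have h2 : ∑ m ∈ Finset.image a S, 2 ^ (2 - m) = ∑ i ∈ S, 2 ^ (2 - a i) :=
      Finset.sum_image (fun i hi j hj h => hinjS hi hj h)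
    rw [himg] at h2
    rw [h1, ← h2]
    decide
  have hdvd7 : q ∣ 7 := by
    have hsplit : ∑ i ∈ S, N i + ∑ i ∈ Sᶜ, N i = 4 * q ^ B := by
      rw [← hsumN, Finset.sum_add_sum_compl]
    have hdvdC : q ∣ ∑ i ∈ Sᶜ, N i := by
      apply Finset.dvd_sum
      intro i hi
      have hbi : b i ≠ B := by
        intro h
        exact (Finset.mem_compl.mp hi) ((hmemS i).mpr h)
      have hle := hbB i
      exact Dvd.dvd.mul_left (dvd_pow_self q (by omega)) _
    have hdvdR : q ∣ 4 * q ^ B := Dvd.dvd.mul_left (dvd_pow_self q (by omega)) 4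
    have : q ∣ ∑ i ∈ S, N i := by
      rw [← hsplit] at hdvdR
      exact (Nat.dvd_add_right hdvdC).mp (by rwa [add_comm] at hdvdR)
    rwa [hsumS] at this
  exact (Nat.prime_dvd_prime_iff_eq hq (by norm_num)).mp hdvd7
end

section
/- Suppose distinct positive integers x_1,…,x_9, each of the form 2^a·q^b for a fixed odd prime q with a ≤ 2, satisfy 1/x_1 + ⋯ + 1/x_9 = 1, q divides at least one x_i, and the maximal q-adic valuation among the x_i is attained exactly twice. Then q = 3 or q = 5. -/
/-!
Let `B` be the largest `q`-adic valuation and write `x_k = 2^{a_k} q^{b_k}`. Multiplying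
`∑ 1/x_k = 1` by `4 q^B` gives `∑ 2^{2-a_k} q^{B-b_k} = 4 q^B` in `ℕ`. Every term with `b_k < B`
is divisible by `q`, so `q` divides the two remaining terms `2^{2-a_i} + 2^{2-a_j}`, where
`a_i ≠ a_j` because `x_i ≠ x_j`. That sum is `3`, `5` or `6`.
-/

open Finset

theorem sum_div_eq_of_sum_one_div_eq_one {ι : Type*} (s : Finset ι) {x : ι → ℕ} {M : ℕ}
    (hdvd : ∀ k ∈ s, x k ∣ M) (hsum : ∑ k ∈ s, (1 : ℚ) / x k = 1) :
    ∑ k ∈ s, M / x k = M := by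
  have hcast : ((∑ k ∈ s, M / x k : ℕ) : ℚ) = M := by
    rw [Nat.cast_sum, sum_congr rfl fun k hk => Nat.cast_div_charZero (hdvd k hk)]
    simp_rw [div_eq_mul_one_div (M : ℚ)]
    rw [← mul_sum, hsum, mul_one]
  exact_mod_cast hcast

theorem pow_mul_pow_div_pow_mul_pow {p q a b A B : ℕ} (hp : 0 < p) (hq : 0 < q)
    (ha : a ≤ A) (hb : b ≤ B) :
    p ^ A * q ^ B / (p ^ a * q ^ b) = p ^ (A - a) * q ^ (B - b) := by
  rw [Nat.mul_div_mul_comm (pow_dvd_pow p ha) (pow_dvd_pow q hb), Nat.pow_div ha hp,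
    Nat.pow_div hb hq]

theorem dvd_sum_of_dvd_sum_of_forall_mem_sdiff {ι : Type*} [DecidableEq ι] {s t : Finset ι}
    {f : ι → ℕ} {d : ℕ} (hts : t ⊆ s) (hs : d ∣ ∑ k ∈ s, f k)
    (hrest : ∀ k ∈ s \ t, d ∣ f k) : d ∣ ∑ k ∈ t, f k := by
  rw [← sum_sdiff hts] at hs
  exact (Nat.dvd_add_right (dvd_sum hrest)).mp hs

theorem exists_pair_of_card_filter_eq_sup_eq_two {ι : Type*} [Fintype ι] [DecidableEq ι]
    (f : ι → ℕ) (h : (univ.filter fun i => f i = univ.sup f).card = 2) :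
    ∃ i j, i ≠ j ∧ f i = univ.sup f ∧ f j = f i ∧ ∀ k, k ≠ i → k ≠ j → f k < f i := by
  obtain ⟨i, j, hij, hpair⟩ := card_eq_two.mp h
  have hmax : ∀ k, f k = univ.sup f ↔ k = i ∨ k = j := fun k => by
    simpa using congrArg (k ∈ ·) hpair
  have hi := (hmax i).mpr (.inl rfl)
  have hj := (hmax j).mpr (.inr rfl)
  refine ⟨i, j, hij, hi, hj.trans hi.symm, fun k hki hkj => ?_⟩
  rw [hi]
  exact (le_sup (mem_univ k)).lt_of_ne fun hk => ((hmax k).mp hk).elim hki hkj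

theorem dvd_pow_add_pow_of_sum_one_div_eq_one {ι : Type*} [Fintype ι] [DecidableEq ι]
    {p q A : ℕ} (hp : 0 < p) (hq : 0 < q) {a b : ι → ℕ} (ha : ∀ k, a k ≤ A)
    (hsum : ∑ k, (1 : ℚ) / ((p ^ a k * q ^ b k : ℕ) : ℚ) = 1) {i j : ι} (hij : i ≠ j)
    (hbij : b j = b i) (hbi : 1 ≤ b i) (hlt : ∀ k, k ≠ i → k ≠ j → b k < b i) :
    q ∣ p ^ (A - a i) + p ^ (A - a j) := by
  have hle : ∀ k, b k ≤ b i := fun k => by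
    by_cases hki : k = i; · rw [hki]
    by_cases hkj : k = j; · rw [hkj, hbij]
    exact (hlt k hki hkj).le
  have htotal : ∑ k, p ^ (A - a k) * q ^ (b i - b k) = p ^ A * q ^ b i := by
    simp_rw [← pow_mul_pow_div_pow_mul_pow hp hq (ha _) (hle _)]
    exact sum_div_eq_of_sum_one_div_eq_one _
      (fun k _ => mul_dvd_mul (pow_dvd_pow p (ha k)) (pow_dvd_pow q (hle k))) hsum
  have hpair := dvd_sum_of_dvd_sum_of_forall_mem_sdiff (subset_univ {i, j})
    (htotal ▸ dvd_mul_of_dvd_right (dvd_pow_self q (by omega)) _) fun k hk => by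
      have hk : k ≠ i ∧ k ≠ j := by simpa using hk
      exact dvd_mul_of_dvd_right (dvd_pow_self q (by have := hlt k hk.1 hk.2; omega)) _
  simpa [sum_pair hij, hbij] using hpair

theorem eq_three_or_five_of_dvd_two_pow_add_two_pow {q u v : ℕ} (hq : q.Prime) (hqodd : Odd q)
    (hu : u ≤ 2) (hv : v ≤ 2) (huv : u ≠ v) (h : q ∣ 2 ^ u + 2 ^ v) : q = 3 ∨ q = 5 := by
  have hq2 : q ≠ 2 := by rintro rfl; exact Nat.not_odd_iff_even.mpr even_two hqodd
  have hdvd : q ∣ 3 ∨ q ∣ 5 ∨ q ∣ 2 * 3 := by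
    interval_cases u <;> interval_cases v <;> simp_all
  rcases hdvd with h3 | h5 | h6
  · exact .inl ((Nat.prime_dvd_prime_iff_eq hq Nat.prime_three).mp h3)
  · exact .inr ((Nat.prime_dvd_prime_iff_eq hq Nat.prime_five).mp h5)
  · rcases hq.dvd_mul.mp h6 with h2 | h3
    · exact absurd ((Nat.prime_dvd_prime_iff_eq hq Nat.prime_two).mp h2) hq2
    · exact .inl ((Nat.prime_dvd_prime_iff_eq hq Nat.prime_three).mp h3)

theorem stmt_13 (q : ℕ) (hq : q.Prime) (hqodd : Odd q)
    (x : Fin 9 → ℕ) (hinj : Function.Injective x) (hx : ∀ i, 0 < x i)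
    (hform : ∀ i, ∃ a b : ℕ, a ≤ 2 ∧ x i = 2 ^ a * q ^ b)
    (hsum : ∑ i, (1 : ℚ) / x i = 1)
    (hdvd : ∃ i, q ∣ x i)
    (htwice : (Finset.univ.filter
      (fun i => padicValNat q (x i) =
        Finset.univ.sup (fun j => padicValNat q (x j)))).card = 2) :
    q = 3 ∨ q = 5 := by
  have : Fact q.Prime := ⟨hq⟩
  have hq2 : q ≠ 2 := by rintro rfl; exact Nat.not_odd_iff_even.mpr even_two hqodd
  choose a b ha hxab using hform
  have hval : ∀ k, padicValNat q (x k) = b k := fun k => by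
    rw [hxab, padicValNat_mul_pow_right _ _ hq2]
  simp only [hval] at htwice
  obtain ⟨i, j, hij, hbi, hbij, hlt⟩ := exists_pair_of_card_filter_eq_sup_eq_two b htwice
  have hbi_pos : 1 ≤ b i := by
    obtain ⟨k, hk⟩ := hdvd
    calc 1 ≤ b k := hval k ▸ one_le_padicValNat_of_dvd (hx k).ne' hk
      _ ≤ b i := hbi ▸ le_sup (mem_univ k)
  have hane : a i ≠ a j := fun h => hij (hinj (by rw [hxab, hxab, h, hbij]))
  have huv : 2 - a i ≠ 2 - a j := by have := ha i; have := ha j; omega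
  simp only [hxab] at hsum
  exact eq_three_or_five_of_dvd_two_pow_add_two_pow hq hqodd (by omega) (by omega) huv
    (dvd_pow_add_pow_of_sum_one_div_eq_one two_pos hq.pos ha hsum hij hbij hbi_pos hlt)
end

section
/- Let n ≥ 9 be odd. The multiset {2, 4} ∪ {7^k, 2·7^k : 1 ≤ k ≤ (n−3)/2} ∪ {4·7^{(n−3)/2}} consists of n distinct positive integers whose reciprocals sum to 1. -/
lemma geom7 (M : ℕ) : 6 * ∑ k ∈ Finset.Icc 1 M, (1/7 : ℚ)^k = 1 - (1/7)^M := by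
  induction M with
  | zero => simp
  | succ M ih =>
    rw [Finset.sum_Icc_succ_top (by omega), mul_add, ih]
    ring

theorem stmt_17 (n : ℕ) (hn : 9 ≤ n) (hodd : Odd n)
    (S : Finset ℕ)
    (hS : S = {2, 4} ∪ ((Finset.Icc 1 ((n - 3) / 2)).image (fun k => 7 ^ k)) ∪
      ((Finset.Icc 1 ((n - 3) / 2)).image (fun k => 2 * 7 ^ k)) ∪
      {4 * 7 ^ ((n - 3) / 2)}) :
    S.card = n ∧ (∀ m ∈ S, 0 < m) ∧ ∑ m ∈ S, (1 : ℚ) / m = 1 := by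
  obtain ⟨j, hj⟩ := hodd
  set M := (n - 3) / 2 with hMdef
  have hM1 : 1 ≤ M := by omega
  have hnM : n = 2 * M + 3 := by omega
  subst hS
  have hinj : Function.Injective (fun k : ℕ => 7 ^ k) :=
    Nat.pow_right_injective (by norm_num)
  have hinj2 : Function.Injective (fun k : ℕ => 2 * 7 ^ k) := by
    intro a b h
    exact hinj (by simpa using Nat.eq_of_mul_eq_mul_left (by norm_num) h)
  have hodd7 : ∀ k : ℕ, Odd (7 ^ k) := fun k => Odd.pow ⟨3, by norm_num⟩
  have hge : ∀ k : ℕ, 1 ≤ k → 7 ≤ 7 ^ k := fun k hk =>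
    le_trans (by norm_num) (Nat.pow_le_pow_right (by norm_num) hk)
  -- disjointness facts
  have hd1 : Disjoint ({2, 4} : Finset ℕ)
      ((Finset.Icc 1 M).image (fun k => 7 ^ k)) := by
    simp only [Finset.disjoint_left, Finset.mem_insert, Finset.mem_singleton,
      Finset.mem_image, Finset.mem_Icc]
    rintro a ha ⟨k, ⟨hk1, _⟩, rfl⟩
    have := hge k hk1
    omega
  have hd2 : Disjoint (({2, 4} : Finset ℕ) ∪ (Finset.Icc 1 M).image (fun k => 7 ^ k))
      ((Finset.Icc 1 M).image (fun k => 2 * 7 ^ k)) := by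
    simp only [Finset.disjoint_right, Finset.mem_union, Finset.mem_insert,
      Finset.mem_singleton, Finset.mem_image, Finset.mem_Icc, not_or]
    rintro a ⟨k, ⟨hk1, _⟩, rfl⟩
    have h1 := hge k hk1
    have h2 := (hodd7 k)
    refine ⟨⟨by omega, by omega⟩, ?_⟩
    rintro ⟨i, ⟨hi1, _⟩, hie⟩
    obtain ⟨t, ht⟩ := hodd7 i
    omega
  have hd3 : Disjoint ((({2, 4} : Finset ℕ) ∪ (Finset.Icc 1 M).image (fun k => 7 ^ k))
      ∪ (Finset.Icc 1 M).image (fun k => 2 * 7 ^ k)) ({4 * 7 ^ M} : Finset ℕ) := by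
    simp only [Finset.disjoint_right, Finset.mem_union, Finset.mem_insert,
      Finset.mem_singleton, Finset.mem_image, Finset.mem_Icc, not_or]
    intro a ha
    subst ha
    have h1 := hge M hM1
    have h2 := hodd7 M
    refine ⟨⟨⟨by omega, by omega⟩, ?_⟩, ?_⟩
    · rintro ⟨k, ⟨hk1, _⟩, hke⟩
      obtain ⟨t, ht⟩ := hodd7 k
      omega
    · rintro ⟨k, ⟨hk1, hk2⟩, hke⟩
      obtain ⟨t, ht⟩ := hodd7 k
      omega
  refine ⟨?_, ?_, ?_⟩
  · rw [Finset.card_union_of_disjoint hd3, Finset.card_union_of_disjoint hd2,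
      Finset.card_union_of_disjoint hd1, Finset.card_image_of_injective _ hinj,
      Finset.card_image_of_injective _ hinj2, Nat.card_Icc]
    simp only [Finset.card_singleton]
    rw [Finset.card_insert_of_notMem (by simp), Finset.card_singleton]
    omega
  · intro m hm
    simp only [Finset.mem_union, Finset.mem_insert, Finset.mem_singleton,
      Finset.mem_image, Finset.mem_Icc] at hm
    rcases hm with (((rfl | rfl) | ⟨k, _, rfl⟩) | ⟨k, _, rfl⟩) | rfl <;> positivity
  · rw [Finset.sum_union hd3, Finset.sum_union hd2, Finset.sum_union hd1,
      Finset.sum_image (fun a _ b _ h => hinj h),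
      Finset.sum_image (fun a _ b _ h => hinj2 h)]
    have e1 : ∀ k ∈ Finset.Icc 1 M, (1 : ℚ) / ((7:ℕ) ^ k : ℕ) = (1/7)^k := by
      intro k _; push_cast; rw [one_div_pow]
    have e2 : ∀ k ∈ Finset.Icc 1 M, (1 : ℚ) / ((2 * 7 ^ k : ℕ) : ℕ) = (1/2) * (1/7)^k := by
      intro k _; push_cast; rw [one_div_pow]; ring
    rw [Finset.sum_congr rfl e1, Finset.sum_congr rfl e2]
    have hg := geom7 M
    set s := ∑ k ∈ Finset.Icc 1 M, (1/7 : ℚ)^k with hs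
    have h4 : ∑ m ∈ ({2, 4} : Finset ℕ), (1 : ℚ) / m = 3/4 := by
      rw [Finset.sum_insert (by simp)]; norm_num
    have h5 : ∑ m ∈ ({4 * 7 ^ M} : Finset ℕ), (1 : ℚ) / m = (1/4) * (1/7)^M := by
      rw [Finset.sum_singleton]; push_cast; rw [one_div_pow]; ring
    rw [h4, h5, ← Finset.mul_sum]
    linarith
end

section
/- For every n ≥ 9, the multiset {2, 4} ∪ {5^k : 1 ≤ k ≤ n−3} ∪ {4·5^{n−3}} consists of n distinct positive integers whose reciprocals sum to 1. -/
lemma geom_sum_fifth (m : ℕ) :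
    ∑ k ∈ Finset.Icc 1 m, (1 : ℚ) / 5 ^ k = (1 - 1 / 5 ^ m) / 4 := by
  induction m with
  | zero => simp
  | succ m ih =>
    rw [Finset.sum_Icc_succ_top (by omega : 1 ≤ m + 1), ih]
    have h5 : (5 : ℚ) ^ m ≠ 0 := by positivity
    field_simp
    ring

theorem stmt_18 (n : ℕ) (hn : 9 ≤ n)
    (S : Finset ℕ)
    (hS : S = {2, 4} ∪ ((Finset.Icc 1 (n - 3)).image (fun k => 5 ^ k)) ∪
      {4 * 5 ^ (n - 3)}) :
    S.card = n ∧ (∀ m ∈ S, 0 < m) ∧ ∑ m ∈ S, (1 : ℚ) / m = 1 := by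
  set m := n - 3 with hm
  have hm6 : 6 ≤ m := by omega
  have h5k : ∀ k, 1 ≤ k → 5 ≤ 5 ^ k := fun k hk => by
    calc 5 = 5 ^ 1 := (pow_one 5).symm
    _ ≤ 5 ^ k := Nat.pow_le_pow_right (by norm_num) hk
  have hodd : ∀ k, (5 : ℕ) ^ k % 2 = 1 := fun k => by
    rw [Nat.pow_mod]; simp
  have hS' : S = insert 2 (insert 4 (insert (4 * 5 ^ m)
      ((Finset.Icc 1 m).image (fun k => 5 ^ k)))) := by
    rw [hS]
    ext x
    simp only [Finset.mem_union, Finset.mem_insert, Finset.mem_singleton, Finset.mem_image]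
    aesop
  have hnm1 : (4 * 5 ^ m) ∉ (Finset.Icc 1 m).image (fun k => 5 ^ k) := by
    simp only [Finset.mem_image, Finset.mem_Icc, not_exists]
    rintro k ⟨⟨hk1, _⟩, hk⟩
    have h1 := hodd k
    omega
  have hnm2 : 4 ∉ insert (4 * 5 ^ m) ((Finset.Icc 1 m).image (fun k => 5 ^ k)) := by
    simp only [Finset.mem_insert, Finset.mem_image, Finset.mem_Icc, not_or, not_exists]
    constructor
    · have : 5 ≤ 5 ^ m := h5k m (by omega)
      omega
    · rintro k ⟨⟨hk1, _⟩, hk⟩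
      have := h5k k hk1
      omega
  have hnm3 : 2 ∉ insert 4 (insert (4 * 5 ^ m)
      ((Finset.Icc 1 m).image (fun k => 5 ^ k))) := by
    simp only [Finset.mem_insert, Finset.mem_image, Finset.mem_Icc, not_or, not_exists]
    refine ⟨by norm_num, by have := h5k m (by omega); omega, ?_⟩
    rintro k ⟨⟨hk1, _⟩, hk⟩
    have := h5k k hk1
    omega
  have hinj : Set.InjOn (fun k => 5 ^ k) (Finset.Icc 1 m) := fun a _ b _ h =>
    Nat.pow_right_injective (by norm_num) h
  refine ⟨?_, ?_, ?_⟩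
  · rw [hS', Finset.card_insert_of_notMem hnm3, Finset.card_insert_of_notMem hnm2,
      Finset.card_insert_of_notMem hnm1, Finset.card_image_of_injOn hinj,
      Nat.card_Icc]
    omega
  · intro x hx
    rw [hS'] at hx
    simp only [Finset.mem_insert, Finset.mem_image, Finset.mem_Icc] at hx
    rcases hx with rfl | rfl | rfl | ⟨k, _, rfl⟩ <;> positivity
  · rw [hS', Finset.sum_insert hnm3, Finset.sum_insert hnm2, Finset.sum_insert hnm1,
      Finset.sum_image hinj]
    have hgeom := geom_sum_fifth m
    have h5 : (5 : ℚ) ^ m ≠ 0 := by positivity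
    push_cast
    rw [hgeom]
    field_simp
    ring
end
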